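/- arXiv:1704.01671 — 2 statements merged into one kernel-verified Lean document; each statement's English description precedes it below -/
import Mathlib

section
/- There exists a matrix P ∈ GL(15, ℤ) such that Pᵀ M P equals the block-diagonal matrix U ⊕ E6(-1) ⊕ E7(-1); that is, the Picard lattice of the family of K3 surfaces associated to Q_{17} is isometric to U ⊕ E6 ⊕ E7. -/
open Matrix

def M : Matrix (Fin 15) (Fin 15) ℤ :=
  !![-2, 0, 0, 0, 0, 0, 1, 0, 1, 1, 0, 0, 0, 0, 0;
    0, -2, 0, 1, 0, 1, 0, 0, 0, 0, 0, 0, 0, 0, 1;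
    0, 0, -2, 1, 1, 0, 0, 0, 0, 0, 0, 0, 0, 0, 0;
    0, 1, 1, -2, 0, 0, 0, 0, 0, 0, 0, 0, 0, 0, 0;
    0, 0, 1, 0, -2, 0, 0, 0, 0, 0, 0, 0, 0, 0, 0;
    0, 1, 0, 0, 0, -2, 0, 0, 0, 0, 0, 0, 0, 0, 0;
    1, 0, 0, 0, 0, 0, -2, 0, 0, 0, 0, 0, 0, 0, 0;
    0, 0, 0, 0, 0, 0, 0, -2, 1, 0, 0, 0, 0, 0, 0;
    1, 0, 0, 0, 0, 0, 0, 1, -2, 0, 0, 0, 0, 0, 0;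
    1, 0, 0, 0, 0, 0, 0, 0, 0, -2, 1, 0, 0, 0, 0;
    0, 0, 0, 0, 0, 0, 0, 0, 0, 1, -2, 1, 0, 0, 0;
    0, 0, 0, 0, 0, 0, 0, 0, 0, 0, 1, -2, 1, 0, 0;
    0, 0, 0, 0, 0, 0, 0, 0, 0, 0, 0, 1, -2, 1, 0;
    0, 0, 0, 0, 0, 0, 0, 0, 0, 0, 0, 0, 1, -2, 1;
    0, 1, 0, 0, 0, 0, 0, 0, 0, 0, 0, 0, 0, 1, -2]

def B : Matrix (Fin 15) (Fin 15) ℤ :=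
  !![0, 1, 0, 0, 0, 0, 0, 0, 0, 0, 0, 0, 0, 0, 0;
    1, 0, 0, 0, 0, 0, 0, 0, 0, 0, 0, 0, 0, 0, 0;
    0, 0, -2, 0, 1, 0, 0, 0, 0, 0, 0, 0, 0, 0, 0;
    0, 0, 0, -2, 0, 1, 0, 0, 0, 0, 0, 0, 0, 0, 0;
    0, 0, 1, 0, -2, 1, 0, 0, 0, 0, 0, 0, 0, 0, 0;
    0, 0, 0, 1, 1, -2, 1, 0, 0, 0, 0, 0, 0, 0, 0;
    0, 0, 0, 0, 0, 1, -2, 1, 0, 0, 0, 0, 0, 0, 0;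
    0, 0, 0, 0, 0, 0, 1, -2, 0, 0, 0, 0, 0, 0, 0;
    0, 0, 0, 0, 0, 0, 0, 0, -2, 0, 1, 0, 0, 0, 0;
    0, 0, 0, 0, 0, 0, 0, 0, 0, -2, 0, 1, 0, 0, 0;
    0, 0, 0, 0, 0, 0, 0, 0, 1, 0, -2, 1, 0, 0, 0;
    0, 0, 0, 0, 0, 0, 0, 0, 0, 1, 1, -2, 1, 0, 0;
    0, 0, 0, 0, 0, 0, 0, 0, 0, 0, 0, 1, -2, 1, 0;
    0, 0, 0, 0, 0, 0, 0, 0, 0, 0, 0, 0, 1, -2, 1;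
    0, 0, 0, 0, 0, 0, 0, 0, 0, 0, 0, 0, 0, 1, -2]

def Pmat : Matrix (Fin 15) (Fin 15) ℤ :=
  !![0, 0, 0, 2, 1, -3, 1, 0, 0, 0, 0, 0, 0, 0, 0;
    4, 4, -4, -4, 0, 4, 0, 0, -4, -2, 1, 1, 0, 1, 0;
    2, 2, -2, -2, 0, 2, 0, 0, -2, -2, 1, 1, 0, 0, 0;
    3, 3, -3, -3, 0, 3, 0, 0, -3, -2, 1, 1, 0, 0, 1;
    1, 1, -1, -1, 0, 1, 0, 0, -1, -1, 0, 1, 0, 0, 0;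
    2, 2, -2, -2, 0, 2, 0, 0, -2, -1, 0, 1, 0, 0, 0;
    0, 0, 0, 1, 0, -1, 0, 0, 0, 0, 0, 0, 0, 0, 0;
    0, 0, 0, 0, 1, -1, 0, 0, 0, 0, 0, 0, 0, 0, 0;
    0, 0, 0, 1, 1, -2, 0, 1, 0, 0, 0, 0, 0, 0, 0;
    0, 0, 0, 2, 1, -2, 0, 0, 0, 0, 0, 0, 0, 0, 0;
    0, 0, 1, 1, 0, -1, 0, 0, 0, 0, 0, 0, 0, 0, 0;
    0, 1, 0, 0, 0, 0, 0, 0, 0, 0, 0, 0, 0, 0, 0;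
    1, 1, -1, -1, 0, 1, 0, 0, 0, 0, 0, 0, 0, 0, 0;
    2, 2, -2, -2, 0, 2, 0, 0, -2, 0, 1, 0, 0, 0, 0;
    3, 3, -3, -3, 0, 3, 0, 0, -3, -1, 1, 0, 1, 0, 0]

def Qmat : Matrix (Fin 15) (Fin 15) ℤ :=
  !![0, 0, 0, 0, 0, 0, 0, 0, 0, 0, 1, -1, 1, 0, 0;
    0, 0, 0, 0, 0, 0, 0, 0, 0, 0, 0, 1, 0, 0, 0;
    0, 0, 0, 0, 0, 0, -1, 0, 0, 0, 1, 0, 0, 0, 0;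
    0, 0, 0, 0, 0, 0, -1, -1, 0, 1, 0, 0, 0, 0, 0;
    0, 0, 0, 0, 0, 0, -2, 0, 0, 1, 0, 0, 0, 0, 0;
    0, 0, 0, 0, 0, 0, -2, -1, 0, 1, 0, 0, 0, 0, 0;
    1, 0, 0, 0, 0, 0, -2, -1, 0, 0, 0, 0, 0, 0, 0;
    0, 0, 0, 0, 0, 0, -1, -1, 1, 0, 0, 0, 0, 0, 0;
    0, 0, 0, 0, 1, -1, 0, 0, 0, 0, 0, 0, 1, 0, 0;
    0, 0, -1, 0, 2, -1, 0, 0, 0, 0, 0, 0, 0, 1, 0;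
    0, 0, 0, 0, 2, -2, 0, 0, 0, 0, 0, 0, 0, 1, 0;
    0, 0, -1, 0, 4, -2, 0, 0, 0, 0, 0, 0, 0, 1, 0;
    0, 0, -1, 0, 3, -2, 0, 0, 0, 0, 0, 0, 0, 0, 1;
    0, 1, -1, 0, 2, -2, 0, 0, 0, 0, 0, 0, 0, 0, 0;
    0, 0, -1, 1, 1, -1, 0, 0, 0, 0, 0, 0, 0, 0, 0]

def R : Matrix (Fin 15) (Fin 15) ℤ :=
  !![0, 0, 0, 0, 0, 0, 0, 0, 0, 0, 0, 1, 0, 0, 0;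
    0, 0, 0, 0, 0, 0, 0, 0, 0, 0, 1, -1, 1, 0, 0;
    0, 0, 0, 0, 0, 0, 0, 0, 0, 1, -2, 0, 0, 0, 0;
    0, 0, 0, 0, 0, 0, 0, 1, 0, -1, 0, 0, 0, 0, 0;
    0, 0, 0, 0, 0, 0, 1, -1, 0, -1, 1, 0, 0, 0, 0;
    1, 0, 0, 0, 0, 0, -1, 0, 0, 0, 0, 0, 0, 0, 0;
    -2, 0, 0, 0, 0, 0, 1, 0, 1, 1, 0, 0, 0, 0, 0;
    1, 0, 0, 0, 0, 0, 0, 1, -2, 0, 0, 0, 0, 0, 0;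
    0, 0, 0, 0, 0, 0, 0, 0, 0, 0, 0, 0, -2, 1, 0;
    0, 0, 1, 0, 0, 0, 0, 0, 0, 0, 0, 0, 0, -1, 0;
    0, 0, -1, 0, 1, 1, 0, 0, 0, 0, 0, 0, 1, -1, 0;
    0, 0, 0, 0, -1, -1, 0, 0, 0, 0, 0, 0, 0, 0, 1;
    0, 1, 0, 0, 0, 0, 0, 0, 0, 0, 0, 0, 0, 1, -2;
    0, -2, 0, 1, 0, 1, 0, 0, 0, 0, 0, 0, 0, 0, 1;
    0, 1, 1, -2, 0, 0, 0, 0, 0, 0, 0, 0, 0, 0, 0]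

set_option maxHeartbeats 1000000 in
lemma hPQ : Pmat * Qmat = 1 := by
  ext i j; fin_cases i <;> fin_cases j <;> decide

set_option maxHeartbeats 1000000 in
lemma hR : Pmatᵀ * M = R := by
  ext i j; fin_cases i <;> fin_cases j <;> decide

set_option maxHeartbeats 1000000 in
lemma hRP : R * Pmat = B := by
  ext i j; fin_cases i <;> fin_cases j <;> decide

theorem stmt_14 :
    (∃ P : Matrix (Fin 15) (Fin 15) ℤ,
      (P.det = 1 ∨ P.det = -1) ∧ Pᵀ * M * P = B) := by
  exact ⟨Pmat, Int.isUnit_iff.mp (Matrix.isUnit_det_of_right_inverse hPQ),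
    by rw [hR, hRP]⟩
end

section
/- The determinant of M' equals -4, the cokernel ℤ² / M'·ℤ² is isomorphic as an abelian group to (ℤ/2ℤ) × (ℤ/2ℤ), and there exists a primitive embedding of the lattice (ℤ², M') into the K3 lattice: an injective ℤ-linear map ι : ℤ² → ℤ²² with (ι x)ᵀ G (ι y) = xᵀ M' y for all x, y ∈ ℤ² such that ℤ²² / ι(ℤ²) is torsion-free. -/
open Matrix

def M' : Matrix (Fin 2) (Fin 2) ℤ :=
  !![0, 2;
    2, -2]

def GK3 : Matrix (Fin 22) (Fin 22) ℤ :=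
  !![0, 1, 0, 0, 0, 0, 0, 0, 0, 0, 0, 0, 0, 0, 0, 0, 0, 0, 0, 0, 0, 0;
    1, 0, 0, 0, 0, 0, 0, 0, 0, 0, 0, 0, 0, 0, 0, 0, 0, 0, 0, 0, 0, 0;
    0, 0, 0, 1, 0, 0, 0, 0, 0, 0, 0, 0, 0, 0, 0, 0, 0, 0, 0, 0, 0, 0;
    0, 0, 1, 0, 0, 0, 0, 0, 0, 0, 0, 0, 0, 0, 0, 0, 0, 0, 0, 0, 0, 0;
    0, 0, 0, 0, 0, 1, 0, 0, 0, 0, 0, 0, 0, 0, 0, 0, 0, 0, 0, 0, 0, 0;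
    0, 0, 0, 0, 1, 0, 0, 0, 0, 0, 0, 0, 0, 0, 0, 0, 0, 0, 0, 0, 0, 0;
    0, 0, 0, 0, 0, 0, -2, 0, 1, 0, 0, 0, 0, 0, 0, 0, 0, 0, 0, 0, 0, 0;
    0, 0, 0, 0, 0, 0, 0, -2, 0, 1, 0, 0, 0, 0, 0, 0, 0, 0, 0, 0, 0, 0;
    0, 0, 0, 0, 0, 0, 1, 0, -2, 1, 0, 0, 0, 0, 0, 0, 0, 0, 0, 0, 0, 0;
    0, 0, 0, 0, 0, 0, 0, 1, 1, -2, 1, 0, 0, 0, 0, 0, 0, 0, 0, 0, 0, 0;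
    0, 0, 0, 0, 0, 0, 0, 0, 0, 1, -2, 1, 0, 0, 0, 0, 0, 0, 0, 0, 0, 0;
    0, 0, 0, 0, 0, 0, 0, 0, 0, 0, 1, -2, 1, 0, 0, 0, 0, 0, 0, 0, 0, 0;
    0, 0, 0, 0, 0, 0, 0, 0, 0, 0, 0, 1, -2, 1, 0, 0, 0, 0, 0, 0, 0, 0;
    0, 0, 0, 0, 0, 0, 0, 0, 0, 0, 0, 0, 1, -2, 0, 0, 0, 0, 0, 0, 0, 0;
    0, 0, 0, 0, 0, 0, 0, 0, 0, 0, 0, 0, 0, 0, -2, 0, 1, 0, 0, 0, 0, 0;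
    0, 0, 0, 0, 0, 0, 0, 0, 0, 0, 0, 0, 0, 0, 0, -2, 0, 1, 0, 0, 0, 0;
    0, 0, 0, 0, 0, 0, 0, 0, 0, 0, 0, 0, 0, 0, 1, 0, -2, 1, 0, 0, 0, 0;
    0, 0, 0, 0, 0, 0, 0, 0, 0, 0, 0, 0, 0, 0, 0, 1, 1, -2, 1, 0, 0, 0;
    0, 0, 0, 0, 0, 0, 0, 0, 0, 0, 0, 0, 0, 0, 0, 0, 0, 1, -2, 1, 0, 0;
    0, 0, 0, 0, 0, 0, 0, 0, 0, 0, 0, 0, 0, 0, 0, 0, 0, 0, 1, -2, 1, 0;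
    0, 0, 0, 0, 0, 0, 0, 0, 0, 0, 0, 0, 0, 0, 0, 0, 0, 0, 0, 1, -2, 1;
    0, 0, 0, 0, 0, 0, 0, 0, 0, 0, 0, 0, 0, 0, 0, 0, 0, 0, 0, 0, 1, -2]

/-- The embedding matrix: columns are the images of the two basis vectors. -/
def Aemb : Matrix (Fin 22) (Fin 2) ℤ :=
  !![1,0; 0,1; 1,-1; 0,1; 0,0; 0,0; 0,0; 0,0; 0,0; 0,0; 0,0;
     0,0; 0,0; 0,0; 0,0; 0,0; 0,0; 0,0; 0,0; 0,0; 0,0; 0,0]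

set_option maxRecDepth 100000 in
lemma Aemb_gram : Aembᵀ * GK3 * Aemb = M' := by decide

lemma Aemb_mulVec_zero (x : Fin 2 → ℤ) : (Aemb *ᵥ x) 0 = x 0 := by
  simp [Aemb, Matrix.mulVec, dotProduct, Fin.sum_univ_two]

lemma Aemb_mulVec_one (x : Fin 2 → ℤ) : (Aemb *ᵥ x) 1 = x 1 := by
  simp [Aemb, Matrix.mulVec, dotProduct, Fin.sum_univ_two]

/-- The projection to the cokernel target. -/
def fcoker : (Fin 2 → ℤ) →ₗ[ℤ] ZMod 2 × ZMod 2 :=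
  LinearMap.prod
    (((Int.castAddHom (ZMod 2)).toIntLinearMap).comp (LinearMap.proj 0))
    (((Int.castAddHom (ZMod 2)).toIntLinearMap).comp (LinearMap.proj 1))

lemma fcoker_apply (v : Fin 2 → ℤ) :
    fcoker v = (((v 0 : ℤ) : ZMod 2), ((v 1 : ℤ) : ZMod 2)) := rfl

lemma M'_mulVec (y : Fin 2 → ℤ) :
    M' *ᵥ y = ![2 * y 1, 2 * y 0 - 2 * y 1] := by
  funext i
  fin_cases i <;>
    simp [M', Matrix.mulVec, dotProduct, Fin.sum_univ_two] <;> ring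

lemma ker_fcoker : LinearMap.ker fcoker = LinearMap.range (Matrix.toLin' M') := by
  ext x
  constructor
  · intro hx
    have h0 : ((x 0 : ℤ) : ZMod 2) = 0 ∧ ((x 1 : ℤ) : ZMod 2) = 0 := by
      have := LinearMap.mem_ker.mp hx
      rw [fcoker_apply] at this
      exact ⟨congrArg Prod.fst this, congrArg Prod.snd this⟩
    obtain ⟨a, ha⟩ := (ZMod.intCast_zmod_eq_zero_iff_dvd (x 0) 2).mp h0.1
    obtain ⟨b, hb⟩ := (ZMod.intCast_zmod_eq_zero_iff_dvd (x 1) 2).mp h0.2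
    refine ⟨![a + b, a], ?_⟩
    rw [Matrix.toLin'_apply, M'_mulVec]
    funext i
    fin_cases i
    · simp [ha]
    · simp [hb]; ring
  · rintro ⟨y, rfl⟩
    rw [Matrix.toLin'_apply, M'_mulVec]
    apply LinearMap.mem_ker.mpr
    rw [fcoker_apply]
    have e0 : ((2 * y 1 : ℤ) : ZMod 2) = 0 :=
      (ZMod.intCast_zmod_eq_zero_iff_dvd _ 2).mpr ⟨y 1, rfl⟩
    have e1 : ((2 * y 0 - 2 * y 1 : ℤ) : ZMod 2) = 0 :=
      (ZMod.intCast_zmod_eq_zero_iff_dvd _ 2).mpr ⟨y 0 - y 1, by ring⟩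
    refine Prod.ext ?_ ?_
    · simpa using e0
    · simpa using e1

lemma fcoker_surj : Function.Surjective fcoker := by
  rintro ⟨a, b⟩
  obtain ⟨a', ha⟩ := ZMod.intCast_surjective (n := 2) a
  obtain ⟨b', hb⟩ := ZMod.intCast_surjective (n := 2) b
  refine ⟨![a', b'], ?_⟩
  rw [fcoker_apply]
  simp [ha, hb]

theorem stmt_16 :
    Matrix.det M' = -4 ∧
    Nonempty (((Fin 2 → ℤ) ⧸ LinearMap.range (Matrix.toLin' M')) ≃+ (ZMod 2 × ZMod 2)) ∧
    ∃ ι : (Fin 2 → ℤ) →ₗ[ℤ] (Fin 22 → ℤ),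
      Function.Injective ι ∧
      (∀ x y : Fin 2 → ℤ, ι x ⬝ᵥ (GK3 *ᵥ ι y) = x ⬝ᵥ (M' *ᵥ y)) ∧
      (∀ (v : Fin 22 → ℤ) (k : ℤ), k ≠ 0 → k • v ∈ LinearMap.range ι → v ∈ LinearMap.range ι) := by
  refine ⟨by norm_num [M', Matrix.det_fin_two_of], ?_, ?_⟩
  · exact ⟨((Submodule.quotEquivOfEq _ _ ker_fcoker.symm).trans
      (fcoker.quotKerEquivOfSurjective fcoker_surj)).toAddEquiv⟩
  · refine ⟨Matrix.toLin' Aemb, ?_, ?_, ?_⟩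
    · intro x y hxy
      have h : Aemb *ᵥ x = Aemb *ᵥ y := by
        simpa [Matrix.toLin'_apply] using hxy
      funext i
      fin_cases i
      · show x 0 = y 0
        rw [← Aemb_mulVec_zero x, ← Aemb_mulVec_zero y, h]
      · show x 1 = y 1
        rw [← Aemb_mulVec_one x, ← Aemb_mulVec_one y, h]
    · intro x y
      rw [Matrix.toLin'_apply, Matrix.toLin'_apply,
        show Aemb *ᵥ x = Matrix.vecMul x Aembᵀ from (Matrix.vecMul_transpose Aemb x).symm,
        Matrix.mulVec_mulVec, Matrix.dotProduct_mulVec, Matrix.vecMul_vecMul,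
        ← Matrix.mul_assoc, Aemb_gram, ← Matrix.dotProduct_mulVec]
    · rintro v k hk ⟨x, hx⟩
      have h0 : x 0 = k * v 0 := by
        have := congrFun hx 0
        rw [Matrix.toLin'_apply, Aemb_mulVec_zero] at this
        simpa using this
      have h1 : x 1 = k * v 1 := by
        have := congrFun hx 1
        rw [Matrix.toLin'_apply, Aemb_mulVec_one] at this
        simpa using this
      have hxeq : x = k • ![v 0, v 1] := by
        funext i
        fin_cases i
        · simpa using h0
        · simpa using h1
      exact ⟨![v 0, v 1], smul_right_injective _ hk
        (by show k • (Matrix.toLin' Aemb) ![v 0, v 1] = k • v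
            rw [← LinearMap.map_smul, ← hxeq]; exact hx)⟩
end
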